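/- For any graph G and any vertex v of G, λ(G - v)² ≥ λ(G)² - 2·d(v), where d(v) is the degree of v. -/

import Mathlib

open Classical in
noncomputable def adjMat {V : Type*} [Fintype V] (G : SimpleGraph V) : Matrix V V ℝ :=
  Matrix.of fun i j => if G.Adj i j then 1 else 0

theorem adjMat_isHermitian {V : Type*} [Fintype V] (G : SimpleGraph V) :
    (adjMat G).IsHermitian := by
  ext i j
  simp only [adjMat, Matrix.conjTranspose_apply, Matrix.of_apply, starRingEnd_apply]
  rw [G.adj_comm]
  simp

/-- Spectral radius: the largest adjacency eigenvalue. -/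
noncomputable def specRad {V : Type*} [Fintype V] [DecidableEq V] (G : SimpleGraph V) : ℝ :=
  ⨆ i, (adjMat_isHermitian G).eigenvalues i

/-- `G` contains a cycle of length `ℓ`. -/
def hasCycle {V : Type*} (G : SimpleGraph V) (ℓ : ℕ) : Prop :=
  ∃ (v : V) (w : G.Walk v v), w.IsCycle ∧ w.length = ℓ

/-!
Let `x` be a unit eigenvector of `A = A(G)` for its largest eigenvalue `λ`, `c = x v`, `z` the
restriction of `x` to `V - v` and `a` the row of `v` restricted to `V - v`. The eigen-equation
gives `λ c = ⟪a, z⟫` at `v` and `A(G - v) z = λ z - c a` elsewhere, hence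
`‖A(G - v) z‖² = λ² ‖z‖² - 2 (λ c)² + c² d(v) ≥ (λ² - 2 d(v)) ‖z‖²` by Cauchy–Schwarz.
Since `A(G - v)` is symmetric with nonnegative entries, all its eigenvalues have absolute value at
most `λ(G - v)`, so `‖A(G - v) z‖ ≤ λ(G - v) ‖z‖`, and dividing by `‖z‖²` gives the claim.
If `z = 0`, then `x` is supported on `v` and `λ c = ⟪a, z⟫ = 0` forces `λ = 0`.
-/

namespace Matrix

variable {ι : Type*} [Fintype ι]

lemma dotProduct_eq_sum_mul_of_orthonormalBasis (b : OrthonormalBasis ι ℝ (EuclideanSpace ℝ ι))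
    (x y : ι → ℝ) : x ⬝ᵥ y = ∑ i, (⇑(b i) ⬝ᵥ x) * (⇑(b i) ⬝ᵥ y) := by
  have := b.sum_inner_mul_inner (WithLp.toLp 2 y) (WithLp.toLp 2 x)
  simp only [EuclideanSpace.inner_eq_star_dotProduct, star_trivial] at this
  rw [← this]
  exact Finset.sum_congr rfl fun i _ => by rw [mul_comm, dotProduct_comm x]

lemma abs_dotProduct_mulVec_le {M : Matrix ι ι ℝ} (hM : ∀ i j, 0 ≤ M i j) (x : ι → ℝ) :
    |x ⬝ᵥ (M *ᵥ x)| ≤ |x| ⬝ᵥ (M *ᵥ |x|) := by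
  simp only [dotProduct, mulVec, Pi.abs_apply]
  refine (Finset.abs_sum_le_sum_abs _ _).trans (Finset.sum_le_sum fun i _ => ?_)
  rw [abs_mul]
  gcongr
  refine (Finset.abs_sum_le_sum_abs _ _).trans (le_of_eq (Finset.sum_congr rfl fun j _ => ?_))
  rw [abs_mul, abs_of_nonneg (hM i j)]

lemma IsHermitian.mul_self_apply_self_nonneg {M : Matrix ι ι ℝ} (hM : M.IsHermitian) (v : ι) :
    0 ≤ (M * M) v v := by
  rw [mul_apply]
  refine Finset.sum_nonneg fun j _ => ?_
  rw [← hM.apply v j, star_trivial]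
  exact mul_self_nonneg _

lemma submatrix_compl_singleton_mulVec {R : Type*} [NonUnitalNonAssocRing R] [DecidableEq ι]
    (M : Matrix ι ι R) (v : ι) (x : ι → R) (i : ({v}ᶜ : Set ι)) :
    (M.submatrix (↑) (↑) *ᵥ ({v}ᶜ : Set ι).domRestrict x) i = (M *ᵥ x) i - M i v * x v := by
  rw [mulVec, dotProduct, mulVec, dotProduct, Fintype.sum_eq_add_sum_subtype_ne _ v,
    add_sub_cancel_left]
  rfl

variable [DecidableEq ι] {M : Matrix ι ι ℝ} (hM : M.IsHermitian)

namespace IsHermitian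

lemma eigenvectorBasis_dotProduct_mulVec (i : ι) (x : ι → ℝ) :
    ⇑(hM.eigenvectorBasis i) ⬝ᵥ (M *ᵥ x) = hM.eigenvalues i * (⇑(hM.eigenvectorBasis i) ⬝ᵥ x) := by
  rw [dotProduct_mulVec, ← mulVec_transpose, ← conjTranspose_eq_transpose_of_trivial, hM.eq,
    mulVec_eigenvectorBasis, smul_dotProduct, smul_eq_mul]

lemma dotProduct_mulVec_eq_sum (x : ι → ℝ) :
    x ⬝ᵥ (M *ᵥ x) = ∑ i, hM.eigenvalues i * (⇑(hM.eigenvectorBasis i) ⬝ᵥ x) ^ 2 := by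
  rw [dotProduct_eq_sum_mul_of_orthonormalBasis hM.eigenvectorBasis]
  simp only [eigenvectorBasis_dotProduct_mulVec hM]
  exact Finset.sum_congr rfl fun i _ => by ring

lemma mulVec_dotProduct_mulVec_eq_sum (x : ι → ℝ) :
    (M *ᵥ x) ⬝ᵥ (M *ᵥ x) = ∑ i, hM.eigenvalues i ^ 2 * (⇑(hM.eigenvectorBasis i) ⬝ᵥ x) ^ 2 := by
  rw [dotProduct_eq_sum_mul_of_orthonormalBasis hM.eigenvectorBasis]
  simp only [eigenvectorBasis_dotProduct_mulVec hM]
  exact Finset.sum_congr rfl fun i _ => by ring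

lemma eigenvectorBasis_dotProduct_self (i : ι) :
    ⇑(hM.eigenvectorBasis i) ⬝ᵥ ⇑(hM.eigenvectorBasis i) = 1 := by
  simpa only [EuclideanSpace.inner_eq_star_dotProduct, star_trivial] using
    hM.eigenvectorBasis.inner_eq_one i

lemma eigenvalues_le_iSup (i : ι) : hM.eigenvalues i ≤ ⨆ j, hM.eigenvalues j :=
  le_ciSup (Set.finite_range _).bddAbove i

lemma dotProduct_mulVec_le (x : ι → ℝ) :
    x ⬝ᵥ (M *ᵥ x) ≤ (⨆ i, hM.eigenvalues i) * (x ⬝ᵥ x) := by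
  rw [hM.dotProduct_mulVec_eq_sum, dotProduct_eq_sum_mul_of_orthonormalBasis hM.eigenvectorBasis,
    Finset.mul_sum]
  refine Finset.sum_le_sum fun i _ => ?_
  rw [← sq]
  exact mul_le_mul_of_nonneg_right (hM.eigenvalues_le_iSup i) (sq_nonneg _)

lemma abs_eigenvalues_le_iSup (h0 : ∀ i j, 0 ≤ M i j) (j : ι) :
    |hM.eigenvalues j| ≤ ⨆ i, hM.eigenvalues i := by
  set w : ι → ℝ := ⇑(hM.eigenvectorBasis j)
  have hw : w ⬝ᵥ w = 1 := hM.eigenvectorBasis_dotProduct_self j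
  have habs : |w| ⬝ᵥ |w| = 1 := by
    rw [← hw]
    simp only [dotProduct, Pi.abs_apply, abs_mul_abs_self]
  calc |hM.eigenvalues j| = |w ⬝ᵥ (M *ᵥ w)| := by
        rw [hM.eigenvectorBasis_dotProduct_mulVec, hw, mul_one]
    _ ≤ |w| ⬝ᵥ (M *ᵥ |w|) := abs_dotProduct_mulVec_le h0 w
    _ ≤ ⨆ i, hM.eigenvalues i := by simpa [habs] using hM.dotProduct_mulVec_le |w|

lemma mulVec_dotProduct_mulVec_le (h0 : ∀ i j, 0 ≤ M i j) (x : ι → ℝ) :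
    (M *ᵥ x) ⬝ᵥ (M *ᵥ x) ≤ (⨆ i, hM.eigenvalues i) ^ 2 * (x ⬝ᵥ x) := by
  rw [hM.mulVec_dotProduct_mulVec_eq_sum, dotProduct_eq_sum_mul_of_orthonormalBasis
    hM.eigenvectorBasis, Finset.mul_sum]
  refine Finset.sum_le_sum fun i _ => ?_
  rw [← sq]
  have := (hM.abs_eigenvalues_le_iSup h0 i).trans (le_abs_self _)
  exact mul_le_mul_of_nonneg_right (sq_le_sq.2 this) (sq_nonneg _)

lemma exists_mulVec_eq_iSup_eigenvalues_smul [Nonempty ι] :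
    ∃ x : ι → ℝ, x ⬝ᵥ x = 1 ∧ M *ᵥ x = (⨆ i, hM.eigenvalues i) • x := by
  obtain ⟨j, hj⟩ := Finite.exists_max hM.eigenvalues
  have hsup : (⨆ i, hM.eigenvalues i) = hM.eigenvalues j :=
    le_antisymm (ciSup_le hj) (hM.eigenvalues_le_iSup j)
  exact ⟨_, hM.eigenvectorBasis_dotProduct_self j, hsup ▸ hM.mulVec_eigenvectorBasis j⟩

end IsHermitian

lemma eigenvalue_mul_apply_eq_dotProduct {v : ι} (hv : M v v = 0) {ρ : ℝ} {x : ι → ℝ}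
    (hx : M *ᵥ x = ρ • x) :
    ρ * x v = ({v}ᶜ : Set ι).domRestrict (M v) ⬝ᵥ ({v}ᶜ : Set ι).domRestrict x := by
  have := congrFun hx v
  rw [mulVec, dotProduct, Fintype.sum_eq_add_sum_subtype_ne _ v, hv, zero_mul, zero_add] at this
  exact this.symm

lemma IsHermitian.mul_self_apply_self_eq_dotProduct (hM : M.IsHermitian) {v : ι}
    (hv : M v v = 0) :
    (M * M) v v = ({v}ᶜ : Set ι).domRestrict (M v) ⬝ᵥ ({v}ᶜ : Set ι).domRestrict (M v) := by
  rw [mul_apply, Fintype.sum_eq_add_sum_subtype_ne _ v, hv, zero_mul, zero_add]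
  refine Finset.sum_congr rfl fun j _ => ?_
  have hsymm : M j v = M v j := by simpa using hM.apply v (j : ι)
  rw [hsymm]
  rfl

lemma IsHermitian.sq_eigenvalue_mul_apply_le (hM : M.IsHermitian) {v : ι} (hv : M v v = 0)
    {ρ : ℝ} {x : ι → ℝ} (hx : M *ᵥ x = ρ • x) :
    (ρ * x v) ^ 2 ≤
      (M * M) v v * (({v}ᶜ : Set ι).domRestrict x ⬝ᵥ ({v}ᶜ : Set ι).domRestrict x) := by
  rw [eigenvalue_mul_apply_eq_dotProduct hv hx, hM.mul_self_apply_self_eq_dotProduct hv]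
  simpa only [dotProduct, sq] using Finset.sum_mul_sq_le_sq_mul_sq Finset.univ _ _

lemma IsHermitian.submatrix_mulVec_domRestrict (hM : M.IsHermitian) {v : ι} {ρ : ℝ}
    {x : ι → ℝ} (hx : M *ᵥ x = ρ • x) :
    M.submatrix Subtype.val Subtype.val *ᵥ ({v}ᶜ : Set ι).domRestrict x =
      ρ • ({v}ᶜ : Set ι).domRestrict x - x v • ({v}ᶜ : Set ι).domRestrict (M v) := by
  ext i
  rw [submatrix_compl_singleton_mulVec, hx, ← hM.apply (i : ι) v]
  simp only [Pi.sub_apply, Pi.smul_apply, smul_eq_mul, star_trivial, Set.domRestrict_apply]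
  ring

lemma IsHermitian.le_submatrix_mulVec_dotProduct_self (hM : M.IsHermitian) {v : ι}
    (hv : M v v = 0) {ρ : ℝ} {x : ι → ℝ} (hx : M *ᵥ x = ρ • x) :
    (ρ ^ 2 - 2 * (M * M) v v) * (({v}ᶜ : Set ι).domRestrict x ⬝ᵥ ({v}ᶜ : Set ι).domRestrict x) ≤
      (M.submatrix Subtype.val Subtype.val *ᵥ ({v}ᶜ : Set ι).domRestrict x) ⬝ᵥ
        (M.submatrix Subtype.val Subtype.val *ᵥ ({v}ᶜ : Set ι).domRestrict x :
          ({v}ᶜ : Set ι) → ℝ) := by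
  have hd := hM.mul_self_apply_self_nonneg v
  have hcs := hM.sq_eigenvalue_mul_apply_le hv hx
  rw [hM.submatrix_mulVec_domRestrict hx]
  simp only [sub_dotProduct, dotProduct_sub, smul_dotProduct, dotProduct_smul, smul_eq_mul,
    dotProduct_comm _ (({v}ᶜ : Set ι).domRestrict (M v)),
    ← eigenvalue_mul_apply_eq_dotProduct hv hx, ← hM.mul_self_apply_self_eq_dotProduct hv]
  nlinarith [mul_nonneg (sq_nonneg (x v)) hd]

theorem IsHermitian.sq_iSup_eigenvalues_sub_le_submatrix (hM : M.IsHermitian)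
    (h0 : ∀ i j, 0 ≤ M i j) (v : ι) (hv : M v v = 0)
    {N : Matrix ({v}ᶜ : Set ι) ({v}ᶜ : Set ι) ℝ} (hN : N.IsHermitian)
    (hNM : N = M.submatrix (↑) (↑)) :
    (⨆ i, hM.eigenvalues i) ^ 2 - 2 * (M * M) v v ≤ (⨆ i, hN.eigenvalues i) ^ 2 := by
  subst hNM
  have : Nonempty ι := ⟨v⟩
  obtain ⟨x, hx1, hx⟩ := hM.exists_mulVec_eq_iSup_eigenvalues_smul
  have hlow := hM.le_submatrix_mulVec_dotProduct_self hv hx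
  have hup := hN.mulVec_dotProduct_mulVec_le (fun i j => h0 i j) (({v}ᶜ : Set ι).domRestrict x)
  have hcs := hM.sq_eigenvalue_mul_apply_le hv hx
  have hnorm : x v ^ 2 + ({v}ᶜ : Set ι).domRestrict x ⬝ᵥ ({v}ᶜ : Set ι).domRestrict x = 1 := by
    rw [← hx1, sq]
    exact (Fintype.sum_eq_add_sum_subtype_ne (fun j => x j * x j) v).symm
  rcases (dotProduct_self_star_nonneg (({v}ᶜ : Set ι).domRestrict x)).eq_or_lt with hz | hz
  · rw [star_trivial] at hz
    rw [← hz] at hcs hnorm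
    nlinarith [hM.mul_self_apply_self_nonneg v, sq_nonneg (⨆ i, hN.eigenvalues i)]
  · exact le_of_mul_le_mul_right (hlow.trans hup) hz

end Matrix

section AdjMat

variable {V : Type*} [Fintype V] (G : SimpleGraph V)

lemma adjMat_nonneg (i j : V) : 0 ≤ adjMat G i j := by
  rw [adjMat, Matrix.of_apply]
  split_ifs <;> norm_num

lemma adjMat_self (v : V) : adjMat G v v = 0 := by
  simp [adjMat]

lemma adjMat_induce (s : Set V) [Fintype s] :
    adjMat (G.induce s) = (adjMat G).submatrix (↑) (↑) := by
  ext i j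
  simp only [adjMat, Matrix.of_apply, Matrix.submatrix_apply]
  congr 1

lemma adjMat_eq_adjMatrix [DecidableRel G.Adj] : adjMat G = G.adjMatrix ℝ := by
  ext i j
  simp [adjMat, SimpleGraph.adjMatrix_apply]

lemma adjMat_mul_self_apply_self [DecidableRel G.Adj] (v : V) :
    (adjMat G * adjMat G) v v = G.degree v := by
  rw [adjMat_eq_adjMatrix, SimpleGraph.adjMatrix_mul_self_apply_self]

end AdjMat

/-- Deleting a vertex `v` decreases the square of the spectral radius by at most `2·d(v)`. -/
theorem specRad_sq_delete_vertex {n : ℕ} (G : SimpleGraph (Fin n)) [DecidableRel G.Adj]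
    (v : Fin n) :
    (specRad G) ^ 2 - 2 * (G.degree v : ℝ) ≤ (specRad (G.induce ({v}ᶜ : Set (Fin n)))) ^ 2 := by
  have h := (adjMat_isHermitian G).sq_iSup_eigenvalues_sub_le_submatrix (adjMat_nonneg G) v
    (adjMat_self G v) (adjMat_isHermitian _) (adjMat_induce G _)
  rwa [adjMat_mul_self_apply_self] at h
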